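/- arXiv:0812.1407 — 2 statements merged into one kernel-verified Lean document; each statement's English description precedes it below -/
import Mathlib

section
/- Let (Gᵢ, pᵢ) be an inverse sequence of countable groups and Hᵢ ≤ Gᵢ subgroups with pᵢ(Hᵢ₊₁) ⊆ Hᵢ for all i. If the inclusion-induced map of pointed sets lim¹ Hᵢ → lim¹ Gᵢ is surjective, then the induced inverse sequence of pointed coset spaces Gᵢ/Hᵢ (pointed at the coset Hᵢ) satisfies the Mittag-Leffler condition. -/
/-- An inverse sequence of groups `⋯ → G₂ → G₁ → G₀`, presented by its compatible
composite bonding homomorphisms `bond h : G j →* G i` for `i ≤ j`; the one-step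
bonding maps `pᵢ` are `bond (Nat.le_succ i) : G (i+1) →* G i`. -/
structure GroupInvSeq (G : ℕ → Type) [∀ i, Group (G i)] : Type where
  bond : ∀ ⦃i j : ℕ⦄, i ≤ j → (G j →* G i)
  bond_refl : ∀ i, bond (le_refl i) = MonoidHom.id (G i)
  bond_comp : ∀ ⦃i j k : ℕ⦄ (hij : i ≤ j) (hjk : j ≤ k),
    (bond hij).comp (bond hjk) = bond (hij.trans hjk)

namespace GroupInvSeq

variable {G : ℕ → Type} [∀ i, Group (G i)]

/-- The orbit relation on `∏ᵢ Gᵢ` of the right action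
`(g₀,g₁,…)·(x₀,x₁,…) = (x₀⁻¹g₀p₀(x₁), x₁⁻¹g₁p₁(x₂), …)`; its orbit set is `lim¹`. -/
def lim1Rel (S : GroupInvSeq G) (g g' : ∀ i, G i) : Prop :=
  ∃ x : ∀ i, G i, ∀ i, g' i = (x i)⁻¹ * g i * S.bond (Nat.le_succ i) (x (i + 1))

/-- The derived limit `lim¹` of an inverse sequence of groups: the orbit set of the
action above, pointed at the class of the identity. -/
def lim1 (S : GroupInvSeq G) : Type :=
  Quot S.lim1Rel

/-- The corresponding orbit relation for the inverse sequence of subgroups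
`Hᵢ ≤ Gᵢ` (with the restricted bonding maps); its orbit set is `lim¹ Hᵢ`. -/
def lim1RelSub (S : GroupInvSeq G) (H : ∀ i, Subgroup (G i))
    (h h' : ∀ i, ↥(H i)) : Prop :=
  ∃ x : ∀ i, ↥(H i), ∀ i,
    (h' i : G i) = (x i : G i)⁻¹ * (h i : G i) *
      S.bond (Nat.le_succ i) (x (i + 1) : G (i + 1))

/-- The map `lim¹ Hᵢ → lim¹ Gᵢ` induced by the inclusions `Hᵢ ↪ Gᵢ`, sending the
class of `(h₀,h₁,…)` to its class in `lim¹ Gᵢ`. -/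
def lim1incl (S : GroupInvSeq G) (H : ∀ i, Subgroup (G i)) :
    Quot (S.lim1RelSub H) → S.lim1 :=
  Quot.lift (fun h => Quot.mk S.lim1Rel fun i => (h i : G i))
    (fun h h' hr => by
      obtain ⟨x, hx⟩ := hr
      exact Quot.sound ⟨fun i => (x i : G i), fun i => hx i⟩)

end GroupInvSeq

/-!
If the images of the `Gₖ` in `Gᵢ/Hᵢ` never stabilise, pick levels `j₀ < j₁ < ⋯` such that the
image of `G_{jₙ₊₁}` misses a coset in the image of `G_{jₙ}`. Let `Wₘ ∈ Gᵢ` be the product of the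
images of `g₀, …, gₘ₋₁` for a sequence `g ∈ ∏ Gₘ`. If `g` is related to a sequence in `∏ Hₘ` by
`x`, pushing the relation down to `Gᵢ` shows that `Wₘ⁻¹ a Hᵢ` lies in the image of `Gₘ` for all
`m`, with `a = Wᵢ xᵢ` independent of `m`. Enumerate `Gᵢ = {a₀, a₁, …}` and let `g` be supported on
the levels `jₙ`, choosing its entry at `jₙ` once `W_{jₙ}` is known so that `W_{jₙ₊₁}⁻¹ aₙ Hᵢ`
falls outside the image of `G_{jₙ₊₁}`. Then no `a` works, so the class of `g` in `lim¹ Gₘ` does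
not come from `lim¹ Hₘ`.
-/

theorem List.prod_map_range_eq_of_eq_one {M : Type*} [Monoid M] {u : ℕ → M} {a b : ℕ}
    (hab : a ≤ b) (hu : ∀ l, a ≤ l → l < b → u l = 1) :
    ((List.range b).map u).prod = ((List.range a).map u).prod := by
  induction b, hab using Nat.le_induction with
  | base => rfl
  | succ b hab ih =>
    rw [List.prod_range_succ, hu b hab b.lt_succ_self, mul_one,
      ih fun l hal hlb => hu l hal (hlb.trans b.lt_succ_self)]

theorem List.prod_map_range_extend_of_strictMono {M : Type*} [Monoid M] {js : ℕ → ℕ}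
    (hjs : StrictMono js) (v : ℕ → M) (n : ℕ) :
    ((List.range (js n)).map (Function.extend js v 1)).prod = ((List.range n).map v).prod := by
  have off_range : ∀ l, (∀ p, js p ≠ l) → Function.extend js v 1 l = 1 := fun l hl =>
    Function.extend_apply' _ _ _ (not_exists.2 hl)
  induction n with
  | zero =>
    refine List.prod_map_range_eq_of_eq_one (Nat.zero_le _) fun l _ hl => off_range l fun p hp => ?_
    exact (hp ▸ hl).not_ge (hjs.monotone (Nat.zero_le p))
  | succ n ih =>
    have gap : ∀ l, js n + 1 ≤ l → l < js (n + 1) → Function.extend js v 1 l = 1 :=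
      fun l hnl hln => off_range l fun p hp => by
        subst hp
        have := hjs.lt_iff_lt.1 hln
        have := hjs.lt_iff_lt.1 hnl
        omega
    rw [List.prod_map_range_eq_of_eq_one (hjs (n.lt_succ_self)) gap, List.prod_range_succ,
      List.prod_range_succ, ih, hjs.injective.extend_apply]

namespace QuotientGroup

variable {G : Type*} [Group G] {H : Subgroup G}

theorem exists_mem_mk_mul_inv_mul_notMem_image {K K' : Subgroup G} (hK : K' ≤ K)
    (hKK' : ¬ (mk '' (K : Set G) : Set (G ⧸ H)) ⊆ mk '' (K' : Set G)) (w a : G) :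
    ∃ v ∈ K, (((w * v)⁻¹ * a : G) : G ⧸ H) ∉ mk '' (K' : Set G) := by
  by_cases hwa : ((w⁻¹ * a : G) : G ⧸ H) ∈ mk '' (K : Set G)
  · obtain ⟨γ, hγ, hγa⟩ := hwa
    obtain ⟨_, ⟨δ, hδ, rfl⟩, hδK'⟩ := Set.not_subset.1 hKK'
    refine ⟨γ * δ⁻¹, mul_mem hγ (inv_mem hδ), ?_⟩
    suffices ((((w * (γ * δ⁻¹))⁻¹ * a : G)) : G ⧸ H) = δ by rwa [this]
    have hγa : γ⁻¹ * (w⁻¹ * a) ∈ H := QuotientGroup.eq.1 hγa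
    rw [QuotientGroup.eq]
    convert inv_mem hγa using 1
    group
  · refine ⟨1, one_mem K, fun h => hwa (Set.image_mono hK ?_)⟩
    simpa using h

theorem exists_forall_exists_notMem_image_of_antitone [Countable G] {B : ℕ → Subgroup G}
    (hB : Antitone B)
    (hB' : ∀ j, ∃ k, j < k ∧ ¬ (mk '' (B j : Set G) : Set (G ⧸ H)) ⊆ mk '' (B k : Set G)) :
    ∃ u : ℕ → G, (∀ m, u m ∈ B m) ∧ ∀ a : G, ∃ m,
      ((((List.range m).map u).prod⁻¹ * a : G) : G ⧸ H) ∉ mk '' (B m : Set G) := by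
  choose next hnext hnext' using hB'
  set js : ℕ → ℕ := fun n => next^[n] 0
  have hjs_succ : ∀ n, js (n + 1) = next (js n) := fun n => Function.iterate_succ_apply' _ _ _
  have hjs : StrictMono js := strictMono_nat_of_lt_succ fun n => hjs_succ n ▸ hnext _
  choose step hstep_mem hstep using fun n => exists_mem_mk_mul_inv_mul_notMem_image (H := H)
    (hB (hjs.monotone n.le_succ)) (hjs_succ n ▸ hnext' (js n))
  obtain ⟨e, he⟩ := exists_surjective_nat G
  let P : ℕ → G := fun n => Nat.rec (motive := fun _ => G) 1 (fun n w => w * step n w (e n)) n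
  let v : ℕ → G := fun n => step n (P n) (e n)
  have hP : ∀ n, ((List.range n).map v).prod = P n := by
    intro n
    induction n with
    | zero => rfl
    | succ n ih => rw [List.prod_range_succ, ih]
  refine ⟨Function.extend js v 1, fun m => ?_, fun a => ?_⟩
  · by_cases hm : ∃ n, js n = m
    · obtain ⟨n, rfl⟩ := hm
      rw [hjs.injective.extend_apply]
      exact hstep_mem _ _ _
    · rw [Function.extend_apply' _ _ _ hm]
      exact one_mem _
  · obtain ⟨n, rfl⟩ := he a
    refine ⟨js (n + 1), ?_⟩
    rw [List.prod_map_range_extend_of_strictMono hjs, hP]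
    exact hstep n (P n) (e n)

end QuotientGroup

namespace GroupInvSeq

variable {G : ℕ → Type} [∀ i, Group (G i)] (S : GroupInvSeq G)

theorem bond_bond {i j k : ℕ} (hij : i ≤ j) (hjk : j ≤ k) (g : G k) :
    S.bond hij (S.bond hjk g) = S.bond (hij.trans hjk) g := by
  rw [← S.bond_comp hij hjk, MonoidHom.comp_apply]

theorem bond_self_apply {i : ℕ} (h : i ≤ i) (g : G i) : S.bond h g = g := by
  rw [S.bond_refl i, MonoidHom.id_apply]

theorem bond_mem {H : ∀ i, Subgroup (G i)}
    (hH : ∀ i, ∀ x ∈ H (i + 1), S.bond (Nat.le_succ i) x ∈ H i)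
    {i m : ℕ} (hm : i ≤ m) {g : G m} (hg : g ∈ H m) : S.bond hm g ∈ H i := by
  induction m, hm using Nat.le_induction with
  | base => rwa [bond_self_apply]
  | succ m hm ih =>
    rw [← S.bond_bond hm (Nat.le_succ m)]
    exact ih (hH m g hg)

theorem lim1Rel_equivalence : Equivalence S.lim1Rel where
  refl _ := ⟨fun _ => 1, fun i => by simp⟩
  symm := by
    rintro g g' ⟨x, hx⟩
    refine ⟨fun i => (x i)⁻¹, fun i => ?_⟩
    rw [hx i, map_inv]
    group
  trans := by
    rintro g g' g'' ⟨x, hx⟩ ⟨y, hy⟩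
    refine ⟨fun i => x i * y i, fun i => ?_⟩
    rw [hy i, hx i, map_mul]
    group

theorem exists_lim1Rel_of_surjective_lim1incl {H : ∀ i, Subgroup (G i)}
    (hsurj : Function.Surjective (lim1incl S H)) (g : ∀ i, G i) :
    ∃ h : ∀ i, H i, S.lim1Rel g fun i => h i := by
  obtain ⟨c, hc⟩ := hsurj (Quot.mk _ g)
  induction c using Quot.ind with
  | mk h =>
    exact ⟨h, S.lim1Rel_equivalence.symm (S.lim1Rel_equivalence.eqvGen_iff.1 (Quot.eq.1 hc))⟩

/-- Taken to be `⊤` below level `i`, so that it makes sense at every level. -/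
def bondRange (i m : ℕ) : Subgroup (G i) :=
  if h : i ≤ m then (S.bond h).range else ⊤

theorem bondRange_of_le {i m : ℕ} (h : i ≤ m) : S.bondRange i m = (S.bond h).range :=
  dif_pos h

theorem bondRange_antitone (i : ℕ) : Antitone (S.bondRange i) := by
  intro m m' hmm'
  by_cases hm : i ≤ m
  · rw [S.bondRange_of_le hm, S.bondRange_of_le (hm.trans hmm')]
    rintro _ ⟨g, rfl⟩
    exact ⟨S.bond hmm' g, S.bond_bond hm hmm' g⟩
  · rw [show S.bondRange i m = ⊤ from dif_neg hm]
    exact le_top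

theorem range_mk_bond {i m : ℕ} (h : i ≤ m) (K : Subgroup (G i)) :
    Set.range (fun g : G m => (QuotientGroup.mk (S.bond h g) : G i ⧸ K)) =
      QuotientGroup.mk '' (S.bondRange i m : Set (G i)) := by
  rw [S.bondRange_of_le h, MonoidHom.coe_range, ← Set.range_comp]
  rfl

theorem exists_bond_eq_of_mem_bondRange {i : ℕ} {u : ℕ → G i} (hu : ∀ m, u m ∈ S.bondRange i m) :
    ∃ g : ∀ m, G m, ∀ m (hm : i ≤ m), S.bond hm (g m) = u m := by
  have : ∀ m, ∃ g : G m, ∀ hm : i ≤ m, S.bond hm g = u m := by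
    intro m
    by_cases hm : i ≤ m
    · obtain ⟨g, hg⟩ := S.bondRange_of_le hm ▸ hu m
      exact ⟨g, fun _ => hg⟩
    · exact ⟨1, fun hm' => absurd hm' hm⟩
  choose g hg using this
  exact ⟨g, hg⟩

theorem exists_forall_mk_mem_image_bondRange {H : ∀ i, Subgroup (G i)}
    (hH : ∀ i, ∀ x ∈ H (i + 1), S.bond (Nat.le_succ i) x ∈ H i)
    {g : ∀ m, G m} {h : ∀ m, H m} (hgh : S.lim1Rel g fun m => h m)
    {i : ℕ} {u : ℕ → G i} (hu : ∀ m (hm : i ≤ m), S.bond hm (g m) = u m) :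
    ∃ a : G i, ∀ m,
      ((((List.range m).map u).prod⁻¹ * a : G i) : G i ⧸ H i) ∈
        QuotientGroup.mk '' (S.bondRange i m : Set (G i)) := by
  obtain ⟨x, hx⟩ := hgh
  let W : ℕ → G i := fun m => ((List.range m).map u).prod
  have hxW : ∀ m (hm : i ≤ m), (W i * x i)⁻¹ * (W m * S.bond hm (x m)) ∈ H i := by
    intro m hm
    induction m, hm using Nat.le_induction with
    | base => simp [bond_self_apply]
    | succ m hm ih =>
      have hx_succ : S.bond (Nat.le_succ m) (x (m + 1)) = (g m)⁻¹ * x m * h m := by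
        have hxm : (h m : G m) = (x m)⁻¹ * g m * S.bond (Nat.le_succ m) (x (m + 1)) := hx m
        rw [hxm]; group
      have hx_succ_i : S.bond (hm.trans (Nat.le_succ m)) (x (m + 1)) =
          (u m)⁻¹ * S.bond hm (x m) * S.bond hm (h m) := by
        rw [← S.bond_bond hm (Nat.le_succ m), hx_succ, map_mul, map_mul, map_inv, hu m hm]
      convert mul_mem ih (S.bond_mem hH hm (h m).2) using 1
      simp only [W, List.prod_range_succ, hx_succ_i]
      group
  refine ⟨W i * x i, fun m => ?_⟩
  by_cases hm : i ≤ m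
  · rw [S.bondRange_of_le hm]
    refine ⟨S.bond hm (x m), ⟨x m, rfl⟩, QuotientGroup.eq.2 ?_⟩
    convert inv_mem (hxW m hm) using 1
    simp only [W]
    group
  · simp [bondRange, dif_neg hm]

end GroupInvSeq

open GroupInvSeq in
/-- For an inverse sequence of countable groups `Gᵢ` with compatible subgroups
`Hᵢ ≤ Gᵢ`: if the inclusion-induced map `lim¹ Hᵢ → lim¹ Gᵢ` is surjective, then the
induced inverse sequence of pointed coset spaces `Gᵢ/Hᵢ` satisfies the Mittag-Leffler
condition. -/
theorem coset_mittagLeffler_of_lim1incl_surjective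
    {G : ℕ → Type} [∀ i, Group (G i)] [∀ i, Countable (G i)]
    (S : GroupInvSeq G) (H : ∀ i, Subgroup (G i))
    (hH : ∀ i, ∀ x ∈ H (i + 1), S.bond (Nat.le_succ i) x ∈ H i)
    (hsurj : Function.Surjective (lim1incl S H)) :
    ∀ i, ∃ j, ∃ hij : i < j, ∀ k, ∀ hjk : j < k,
      Set.range (fun g : G k =>
        (QuotientGroup.mk (S.bond (hij.le.trans hjk.le) g) : G i ⧸ H i)) =
      Set.range (fun g : G j =>
        (QuotientGroup.mk (S.bond hij.le g) : G i ⧸ H i)) := by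
  intro i
  by_contra hML
  push Not at hML
  simp only [S.range_mk_bond] at hML
  set B := S.bondRange i
  have hB : Antitone B := S.bondRange_antitone i
  have hB' : ∀ j, ∃ k, j < k ∧ ¬ (QuotientGroup.mk '' (B j : Set (G i)) : Set (G i ⧸ H i)) ⊆
      QuotientGroup.mk '' (B k : Set (G i)) := by
    intro j
    obtain ⟨k, hk, hne⟩ := hML (max j (i + 1)) (by omega)
    refine ⟨k, (le_max_left _ _).trans_lt hk, fun hsub => hne ?_⟩
    exact (Set.image_mono (hB hk.le)).antisymm
      ((Set.image_mono (hB (le_max_left _ _))).trans hsub)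
  obtain ⟨u, huB, hu⟩ := QuotientGroup.exists_forall_exists_notMem_image_of_antitone hB hB'
  obtain ⟨g, hg⟩ := S.exists_bond_eq_of_mem_bondRange huB
  obtain ⟨h, hgh⟩ := S.exists_lim1Rel_of_surjective_lim1incl hsurj g
  obtain ⟨a, ha⟩ := S.exists_forall_mk_mem_image_bondRange hH hgh hg
  obtain ⟨m, hm⟩ := hu a
  exact hm (ha m)
end

section
/- Let (⋯ → G₂ → G₁ → G₀) be an inverse sequence of pointed sets that either is an inverse sequence of groups and group homomorphisms or has every Gᵢ finite, and assume it satisfies the Mittag-Leffler condition. If the inverse limit lim Gᵢ is discrete in the inverse limit topology (each Gᵢ carrying the discrete topology), then the sequence satisfies the dual Mittag-Leffler condition. -/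
/-!
Discreteness of the limit isolates the trivial thread, and a basic neighbourhood in the product
constrains only finitely many coordinates, so there is a level `N` at which the trivial thread is
the only thread through the basepoint. Under Mittag-Leffler, every element of the stable image
at level `j` extends to a thread, and for `i` large the image of `X i → X j` lies in the stable
image. So if `x : X i` is sent to the basepoint of `X N`, its image in `X j` lies on a thread
through the basepoint at `N`, hence on the trivial thread, and is therefore the basepoint of `X j`.
-/

/-- An inverse sequence of pointed sets `⋯ → X₂ → X₁ → X₀`, presented by its
compatible composite basepoint-preserving bonding maps `bond h : X j → X i` for
`i ≤ j`; the one-step bonding maps are `bond (Nat.le_succ i) : X (i+1) → X i`. -/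
structure PointedInvSeq (X : ℕ → Type) (pt : ∀ i, X i) : Type where
  bond : ∀ ⦃i j : ℕ⦄, i ≤ j → X j → X i
  bond_refl : ∀ i (x : X i), bond (le_refl i) x = x
  bond_comp : ∀ ⦃i j k : ℕ⦄ (hij : i ≤ j) (hjk : j ≤ k) (x : X k),
    bond (hij.trans hjk) x = bond hij (bond hjk x)
  bond_pt : ∀ ⦃i j : ℕ⦄ (h : i ≤ j), bond h (pt j) = pt i

namespace PointedInvSeq

variable {X : ℕ → Type} {pt : ∀ i, X i}

/-- The Mittag-Leffler condition: for each `i` there is `j > i` such that for all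
`k > j` the image of `X k → X i` equals the image of `X j → X i`. -/
def MittagLeffler (S : PointedInvSeq X pt) : Prop :=
  ∀ i, ∃ j, ∃ hij : i < j, ∀ k, ∀ hjk : j < k,
    Set.range (S.bond (hij.le.trans hjk.le)) = Set.range (S.bond hij.le)

/-- The dual Mittag-Leffler condition: there is `k` such that for every `j > k`
there is `i > j` for which the kernel (preimage of the basepoint) of `X i → X k`
equals the kernel of `X i → X j`. -/
def DualMittagLeffler (S : PointedInvSeq X pt) : Prop :=
  ∃ k, ∀ j, ∀ hkj : k < j, ∃ i, ∃ hji : j < i,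
    {x : X i | S.bond (hkj.le.trans hji.le) x = pt k} =
      {x : X i | S.bond hji.le x = pt j}

end PointedInvSeq

namespace PointedInvSeq

variable {X : ℕ → Type} {pt : ∀ i, X i} (S : PointedInvSeq X pt)

def IsThread (g : ∀ i, X i) : Prop :=
  ∀ i, S.bond (Nat.le_succ i) (g (i + 1)) = g i

theorem isThread_pt : S.IsThread pt :=
  fun i => S.bond_pt (Nat.le_succ i)

def stableImage (j : ℕ) : Set (X j) :=
  ⋂ (k) (h : j ≤ k), Set.range (S.bond h)

variable {S}

theorem IsThread.bond_eq {g : ∀ i, X i} (hg : S.IsThread g) {i m : ℕ} (h : i ≤ m) :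
    S.bond h (g m) = g i := by
  induction m, h using Nat.le_induction with
  | base => exact S.bond_refl i (g i)
  | succ m him ih => rw [S.bond_comp him (Nat.le_succ m), hg m, ih]

theorem exists_isThread_apply_eq_of_lift {A : ∀ i, Set (X i)}
    (hlift : ∀ i, ∀ y ∈ A i, ∃ z ∈ A (i + 1), S.bond (Nat.le_succ i) z = y)
    {j : ℕ} {y : X j} (hy : y ∈ A j) : ∃ g, S.IsThread g ∧ g j = y := by
  choose lift lift_mem bond_lift using hlift
  let d : ∀ n, A (j + n) := fun n =>
    Nat.rec (motive := fun n => A (j + n)) ⟨y, hy⟩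
      (fun n z => ⟨lift _ z.1 z.2, lift_mem _ _ _⟩) n
  have bond_d_succ : ∀ n, S.bond (Nat.le_succ (j + n)) (d (n + 1)) = d n :=
    fun n => bond_lift _ _ (d n).2
  have bond_d : ∀ n, S.bond (Nat.le_add_right j n) (d n) = y := by
    intro n
    induction n with
    | zero => exact S.bond_refl j y
    | succ n ih => rw [S.bond_comp (Nat.le_add_right j n) (Nat.le_succ (j + n)), bond_d_succ, ih]
  refine ⟨fun i => S.bond (Nat.le_add_left i j) (d i), fun i => ?_, bond_d j⟩
  dsimp only
  rw [← S.bond_comp (Nat.le_succ i) (Nat.le_add_left (i + 1) j),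
    S.bond_comp (Nat.le_add_left i j) (Nat.le_succ (j + i)), bond_d_succ]

theorem MittagLeffler.exists_range_subset_stableImage (hML : S.MittagLeffler) (j : ℕ) :
    ∃ J, ∃ h : j < J, Set.range (S.bond h.le) ⊆ S.stableImage j := by
  obtain ⟨J, hjJ, hstab⟩ := hML j
  refine ⟨J, hjJ, ?_⟩
  rintro _ ⟨x, rfl⟩
  refine Set.mem_iInter₂.2 fun k hjk => ?_
  rcases le_or_gt k J with hkJ | hJk
  · exact ⟨S.bond hkJ x, (S.bond_comp hjk hkJ x).symm⟩
  · exact hstab k hJk ▸ ⟨x, rfl⟩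

theorem MittagLeffler.exists_lift_stableImage (hML : S.MittagLeffler) {j : ℕ} {y : X j}
    (hy : y ∈ S.stableImage j) :
    ∃ z ∈ S.stableImage (j + 1), S.bond (Nat.le_succ j) z = y := by
  obtain ⟨J, hJ, hsub⟩ := hML.exists_range_subset_stableImage (j + 1)
  obtain ⟨w, rfl⟩ := Set.mem_iInter₂.1 hy J (Nat.le_succ j |>.trans hJ.le)
  exact ⟨S.bond hJ.le w, hsub ⟨w, rfl⟩, (S.bond_comp (Nat.le_succ j) hJ.le w).symm⟩

theorem MittagLeffler.exists_isThread_apply_eq (hML : S.MittagLeffler) {j : ℕ} {y : X j}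
    (hy : y ∈ S.stableImage j) : ∃ g, S.IsThread g ∧ g j = y :=
  exists_isThread_apply_eq_of_lift (fun _ _ => hML.exists_lift_stableImage) hy

variable [∀ i, TopologicalSpace (X i)]

theorem exists_eq_of_apply_eq_of_isOpen_singleton {g₀ : ∀ i, X i} (hg₀ : S.IsThread g₀)
    (hopen : IsOpen {(⟨g₀, hg₀⟩ : {g // S.IsThread g})}) :
    ∃ N, ∀ g, S.IsThread g → g N = g₀ N → g = g₀ := by
  obtain ⟨U, hU, hUg₀⟩ := isOpen_induced_iff.1 hopen
  have mem_U : ∀ g (hg : S.IsThread g), g ∈ U ↔ g = g₀ := fun g hg => by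
    simpa [Subtype.ext_iff] using Set.ext_iff.1 hUg₀ ⟨g, hg⟩
  obtain ⟨I, u, hu, hIU⟩ := isOpen_pi_iff.1 hU g₀ ((mem_U g₀ hg₀).2 rfl)
  refine ⟨I.sup id, fun g hg hgN => (mem_U g hg).1 (hIU fun i hi => ?_)⟩
  have hiN : i ≤ I.sup id := Finset.le_sup (f := id) hi
  rw [← hg.bond_eq hiN, hgN, hg₀.bond_eq hiN]
  exact (hu i hi).2

end PointedInvSeq

open PointedInvSeq in
theorem dualMittagLeffler_of_mittagLeffler_of_discrete_lim_general
    {X : ℕ → Type} (pt : ∀ i, X i) (S : PointedInvSeq X pt)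
    [∀ i, TopologicalSpace (X i)]
    (hML : S.MittagLeffler)
    (hdisc : DiscreteTopology
      {g : ∀ i, X i // ∀ i, S.bond (Nat.le_succ i) (g (i + 1)) = g i}) :
    S.DualMittagLeffler := by
  obtain ⟨N, hN⟩ := exists_eq_of_apply_eq_of_isOpen_singleton S.isThread_pt
    (@isOpen_discrete _ _ hdisc _)
  refine ⟨N, fun j hNj => ?_⟩
  obtain ⟨i, hji, hsub⟩ := hML.exists_range_subset_stableImage j
  refine ⟨i, hji, Set.ext fun x => ⟨fun hx => ?_, fun hx => ?_⟩⟩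
  · obtain ⟨g, hg, hgj⟩ := hML.exists_isThread_apply_eq (hsub ⟨x, rfl⟩)
    have hgN : g N = pt N := by
      rw [← hg.bond_eq hNj.le, hgj, ← S.bond_comp]
      exact hx
    exact hgj.symm.trans (congrFun (hN g hg hgN) j)
  · change S.bond _ x = pt N
    rw [S.bond_comp hNj.le hji.le, (hx : S.bond hji.le x = pt j), S.bond_pt]

/-- If an inverse sequence of pointed sets either consists of groups and group
homomorphisms or has all terms finite, satisfies the Mittag-Leffler condition, and
its inverse limit (topologized as a subspace of the product of the discrete spaces
`Xᵢ`) is discrete, then the sequence satisfies the dual Mittag-Leffler condition. -/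
theorem dualMittagLeffler_of_mittagLeffler_of_discrete_lim
    {X : ℕ → Type} (pt : ∀ i, X i) (S : PointedInvSeq X pt)
    [∀ i, TopologicalSpace (X i)] [∀ i, DiscreteTopology (X i)]
    (hcase : (∀ i, Finite (X i)) ∨
      ∃ grp : ∀ i, Group (X i),
        (∀ i, pt i = (letI := grp i; (1 : X i))) ∧
        ∀ ⦃i j : ℕ⦄ (h : i ≤ j) (x y : X j),
          S.bond h (letI := grp j; x * y) =
            (letI := grp i; S.bond h x * S.bond h y))
    (hML : S.MittagLeffler)
    (hdisc : DiscreteTopology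
      {g : ∀ i, X i // ∀ i, S.bond (Nat.le_succ i) (g (i + 1)) = g i}) :
    S.DualMittagLeffler :=
  dualMittagLeffler_of_mittagLeffler_of_discrete_lim_general pt S hML hdisc
end
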